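/- arXiv:1011.3349 — 3 statements merged into one kernel-verified Lean document; each statement's English description precedes it below -/
import Mathlib

section
/- Let F be a field and suppose every wild F[z]-automorphism (f,g) of F[z][x,y] fails to lift to a z-fixing automorphism of the free associative algebra F⟨x,y,z⟩. Then for any wild F[z]-automorphism (f,g), neither f nor g can occur as a component of any z-fixing automorphism of F⟨x,y,z⟩ whose abelianization has that component; in particular f cannot be lifted to a z-coordinate of F⟨x,y,z⟩. -/
open MvPolynomial

noncomputable section

variable (F : Type) [Field F]

/-- The abelianization `F⟨x,y,z⟩ → F[z][x,y] ≅ F[x,y,z]`: it sends the free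
generators `x, y` to the commutative variables and `z` to the scalar `z ∈ F[z]`. -/
def ab : FreeAlgebra F (Fin 3) →ₐ[F] MvPolynomial (Fin 2) (Polynomial F) :=
  FreeAlgebra.lift F ![X 0, X 1, C Polynomial.X]

/-- Elementary `F[z]`-automorphisms of `F[z][x,y]`. -/
def IsElementary
    (φ : MvPolynomial (Fin 2) (Polynomial F) ≃ₐ[Polynomial F]
      MvPolynomial (Fin 2) (Polynomial F)) : Prop :=
  (∃ (α : F) (_ : α ≠ 0) (p : Polynomial (Polynomial F)),
      φ (X 0) = X 0 ∧
      φ (X 1) = C (Polynomial.C α) * X 1 + Polynomial.aeval (X 0) p) ∨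
  (∃ (α : F) (_ : α ≠ 0) (p : Polynomial (Polynomial F)),
      φ (X 1) = X 1 ∧
      φ (X 0) = C (Polynomial.C α) * X 0 + Polynomial.aeval (X 1) p)

/-- Linear (affine with invertible matrix) `F[z]`-automorphisms of `F[z][x,y]`. -/
def IsLinear
    (φ : MvPolynomial (Fin 2) (Polynomial F) ≃ₐ[Polynomial F]
      MvPolynomial (Fin 2) (Polynomial F)) : Prop :=
  ∃ a b c d e f : Polynomial F, IsUnit (a * d - b * c) ∧
    φ (X 0) = C a * X 0 + C b * X 1 + C e ∧
    φ (X 1) = C c * X 0 + C d * X 1 + C f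

/-- A wild `F[z]`-automorphism: not a composition of elementary and linear ones. -/
def IsWild
    (φ : MvPolynomial (Fin 2) (Polynomial F) ≃ₐ[Polynomial F]
      MvPolynomial (Fin 2) (Polynomial F)) : Prop :=
  φ ∉ Subgroup.closure {ψ | IsElementary F ψ ∨ IsLinear F ψ}

/-- `(f, g)` lifts to a `z`-fixing automorphism of the free algebra `F⟨x,y,z⟩`. -/
def LiftsToZAut (f g : MvPolynomial (Fin 2) (Polynomial F)) : Prop :=
  ∃ ψ : FreeAlgebra F (Fin 3) ≃ₐ[F] FreeAlgebra F (Fin 3),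
    ψ (FreeAlgebra.ι F 2) = FreeAlgebra.ι F 2 ∧
    ab F (ψ (FreeAlgebra.ι F 0)) = f ∧ ab F (ψ (FreeAlgebra.ι F 1)) = g

/-!
An `F[z]`-automorphism of `F[z][x,y]` fixing `y` is an automorphism of `(F[z][y])[x]` over
`F[z][y]`, hence affine in `x` and elementary. So two automorphisms sharing a component, up to
exchanging `x` and `y`, differ by a tame one and are wild together. A `z`-automorphism `ψ` of
`F⟨x,y,z⟩` abelianizes to an `F[z]`-automorphism `θ` of `F[z][x,y]` which lifts by construction.
If a component of `ψ` abelianizes to a component of a wild `φ` (it is not the `z`-component,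
which abelianizes to the constant `z`), then `θ` shares a component with `φ`, so `θ` is a wild
automorphism that lifts.
-/

namespace Polynomial

theorem exists_isUnit_map_X_eq {A : Type*} [CommRing A] [IsDomain A] (τ : A[X] ≃ₐ[A] A[X]) :
    ∃ u c : A, IsUnit u ∧ τ X = C u * X + C c := by
  have hinv : (τ.symm X).comp (τ X) = X := by
    rw [comp_eq_aeval, aeval_algHom_apply, aeval_X_left_apply, τ.apply_symm_apply]
  have hdeg : (τ.symm X).natDegree * (τ X).natDegree = 1 := by
    rw [← natDegree_comp, hinv, natDegree_X]
  have hdeg₁ : (τ X).natDegree = 1 := Nat.eq_one_of_mul_eq_one_left hdeg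
  have hlead : (τ.symm X).leadingCoeff * (τ X).leadingCoeff = 1 := by
    rw [← pow_one (τ X).leadingCoeff, ← Nat.eq_one_of_mul_eq_one_right hdeg,
      ← leadingCoeff_comp (by omega), hinv, leadingCoeff_X]
  refine ⟨(τ X).coeff 1, (τ X).coeff 0, ?_, eq_X_add_C_of_natDegree_le_one hdeg₁.le⟩
  rw [← hdeg₁]
  exact IsUnit.of_mul_eq_one_right _ hlead

end Polynomial

namespace MvPolynomial

variable (R : Type*) [CommSemiring R]

def finTwoEquivPolynomial : MvPolynomial (Fin 2) R ≃ₐ[R] Polynomial (Polynomial R) :=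
  AlgEquiv.ofAlgHom (aeval ![Polynomial.X, Polynomial.C Polynomial.X])
    (Polynomial.aevalTower (Polynomial.aeval (X 1)) (X 0))
    (Polynomial.algHom_ext' (Polynomial.algHom_ext (by simp)) (by simp))
    (algHom_ext fun i => by fin_cases i <;> simp)

variable {R}

@[simp] lemma finTwoEquivPolynomial_X_one :
    finTwoEquivPolynomial R (X 1) = Polynomial.C Polynomial.X := by
  simp [finTwoEquivPolynomial]

@[simp] lemma finTwoEquivPolynomial_symm_X :
    (finTwoEquivPolynomial R).symm Polynomial.X = X 0 := by
  simp [finTwoEquivPolynomial]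

@[simp] lemma finTwoEquivPolynomial_symm_C (p : Polynomial R) :
    (finTwoEquivPolynomial R).symm (Polynomial.C p) = Polynomial.aeval (X 1) p := by
  simp [finTwoEquivPolynomial]

variable {σ : Type*} [Nontrivial R]

theorem X_ne_C (i : σ) (r : R) : (X i : MvPolynomial σ R) ≠ C r := by
  classical
  intro h
  have := congr_arg (coeff (Finsupp.single i 1)) h
  rw [coeff_X_same, coeff_C, if_neg (Finsupp.single_ne_zero.mpr one_ne_zero).symm] at this
  exact one_ne_zero this

theorem _root_.AlgEquiv.map_X_ne_C (φ : MvPolynomial σ R ≃ₐ[R] MvPolynomial σ R) (i : σ) (r : R) :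
    φ (X i) ≠ C r := by
  rw [← algebraMap_eq, ← φ.commutes, Ne, φ.injective.eq_iff, algebraMap_eq]
  exact X_ne_C i r

end MvPolynomial

local notation "B" => MvPolynomial (Fin 2) (Polynomial F)

def tameSubgroup : Subgroup (B ≃ₐ[Polynomial F] B) :=
  Subgroup.closure {ψ | IsElementary F ψ ∨ IsLinear F ψ}

lemma isElementary_of_map_X_one (σ : B ≃ₐ[Polynomial F] B) (h : σ (X 1) = X 1) :
    IsElementary F σ := by
  let e := finTwoEquivPolynomial (Polynomial F)
  -- Fixing `y`, `σ` is an automorphism of `(F[z][y])[x]` over `F[z][y]`.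
  let τ₀ := (e.symm.trans σ).trans e
  have hC : ∀ p, τ₀ (Polynomial.C p) = Polynomial.C p := by
    have : (τ₀ : _ →ₐ[Polynomial F] _).comp Polynomial.CAlgHom = Polynomial.CAlgHom :=
      Polynomial.algHom_ext (by simp [τ₀, e, h])
    exact fun p => AlgHom.congr_fun this p
  obtain ⟨u, c, hu, hτ⟩ :=
    Polynomial.exists_isUnit_map_X_eq (AlgEquiv.ofRingEquiv (f := τ₀.toRingEquiv) hC)
  obtain ⟨v, hv, rfl⟩ := Polynomial.isUnit_iff.mp hu
  obtain ⟨α, hα, rfl⟩ := Polynomial.isUnit_iff.mp hv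
  refine Or.inr ⟨α, hα.ne_zero, c, h, ?_⟩
  have : σ (X 0) = e.symm (τ₀ Polynomial.X) := by simp [τ₀, e]
  rw [this, show τ₀ Polynomial.X = _ from hτ]
  simp [e]

def swapVar (i : Fin 2) : B ≃ₐ[Polynomial F] B :=
  renameEquiv (Polynomial F) (Equiv.swap 0 i)

@[simp] lemma swapVar_X_zero (i : Fin 2) : swapVar F i (X 0) = X i := by
  simp [swapVar]

lemma swapVar_mem_tameSubgroup (i : Fin 2) : swapVar F i ∈ tameSubgroup F := by
  refine Subgroup.subset_closure (Or.inr ?_)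
  fin_cases i
  · exact ⟨1, 0, 0, 1, 0, 0, by simp, by simp [swapVar], by simp [swapVar]⟩
  · exact ⟨0, 1, 1, 0, 0, 0, by simp, by simp [swapVar], by simp [swapVar]⟩

lemma mem_tameSubgroup_of_map_X_zero (σ : B ≃ₐ[Polynomial F] B) (h : σ (X 0) = X 0) :
    σ ∈ tameSubgroup F := by
  have hs := swapVar_mem_tameSubgroup F 1
  have hconj : swapVar F 1 * σ * swapVar F 1 ∈ tameSubgroup F := by
    refine Subgroup.subset_closure (Or.inl (isElementary_of_map_X_one F _ ?_))
    simp [swapVar, h]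
  have : σ = (swapVar F 1)⁻¹ * (swapVar F 1 * σ * swapVar F 1) * (swapVar F 1)⁻¹ := by group
  rw [this]
  exact mul_mem (mul_mem (inv_mem hs) hconj) (inv_mem hs)

lemma IsWild.of_map_X_eq {φ θ : B ≃ₐ[Polynomial F] B} (hφ : IsWild F φ) {i j : Fin 2}
    (h : θ (X i) = φ (X j)) : IsWild F θ := by
  intro hθ
  set σ := (θ * swapVar F i)⁻¹ * (φ * swapVar F j) with hσdef
  have hσ : σ (X 0) = X 0 := by
    rw [AlgEquiv.mul_apply, AlgEquiv.mul_apply φ, swapVar_X_zero, ← h, ← swapVar_X_zero F i,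
      ← AlgEquiv.mul_apply, ← AlgEquiv.mul_apply, mul_assoc, inv_mul_cancel, AlgEquiv.one_apply]
  have hφσ : φ = θ * swapVar F i * σ * (swapVar F j)⁻¹ := by rw [hσdef]; group
  apply hφ
  rw [hφσ]
  exact mul_mem (mul_mem (mul_mem hθ (swapVar_mem_tameSubgroup F i))
    (mem_tameSubgroup_of_map_X_zero F σ hσ)) (inv_mem (swapVar_mem_tameSubgroup F j))

lemma ab_ι_castSucc (k : Fin 2) : ab F (FreeAlgebra.ι F k.castSucc) = X k := by
  fin_cases k <;> simp [ab]

lemma ab_ι_two : ab F (FreeAlgebra.ι F 2) = C Polynomial.X := by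
  simp [ab]

def abMap (ψ : FreeAlgebra F (Fin 3) →ₐ[F] FreeAlgebra F (Fin 3)) : B →ₐ[Polynomial F] B :=
  aeval fun k => ab F (ψ (FreeAlgebra.ι F k.castSucc))

section abMap

variable {F} {ψ : FreeAlgebra F (Fin 3) →ₐ[F] FreeAlgebra F (Fin 3)}

lemma abMap_X (k : Fin 2) : abMap F ψ (X k) = ab F (ψ (FreeAlgebra.ι F k.castSucc)) :=
  aeval_X _ _

lemma abMap_ab (hψ : ψ (FreeAlgebra.ι F 2) = FreeAlgebra.ι F 2) (w : FreeAlgebra F (Fin 3)) :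
    abMap F ψ (ab F w) = ab F (ψ w) := by
  suffices ((abMap F ψ).restrictScalars F).comp (ab F) = (ab F).comp ψ from
    AlgHom.congr_fun this w
  refine FreeAlgebra.hom_ext (funext fun i => ?_)
  obtain ⟨k, rfl⟩ | rfl := i.eq_castSucc_or_eq_last
  · simp [ab_ι_castSucc, abMap_X]
  · change abMap F ψ (ab F (FreeAlgebra.ι F 2)) = ab F (ψ (FreeAlgebra.ι F 2))
    rw [hψ, ab_ι_two, ← algebraMap_eq, AlgHom.commutes]

lemma abMap_comp (hψ : ψ (FreeAlgebra.ι F 2) = FreeAlgebra.ι F 2)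
    (ψ' : FreeAlgebra F (Fin 3) →ₐ[F] FreeAlgebra F (Fin 3)) :
    abMap F (ψ.comp ψ') = (abMap F ψ).comp (abMap F ψ') :=
  algHom_ext fun k => by simp [abMap_X, abMap_ab hψ]

lemma abMap_id : abMap F (AlgHom.id F (FreeAlgebra F (Fin 3))) = AlgHom.id _ B :=
  algHom_ext fun k => by simp [abMap_X, ab_ι_castSucc]

end abMap

def abEquiv (ψ : FreeAlgebra F (Fin 3) ≃ₐ[F] FreeAlgebra F (Fin 3))
    (hψ : ψ (FreeAlgebra.ι F 2) = FreeAlgebra.ι F 2) : B ≃ₐ[Polynomial F] B :=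
  AlgEquiv.ofAlgHom (abMap F ψ) (abMap F ψ.symm)
    (by rw [← abMap_comp hψ, ψ.comp_symm, abMap_id])
    (by rw [← abMap_comp (ψ.symm_apply_eq.mpr hψ.symm), ψ.symm_comp, abMap_id])

lemma abEquiv_X (ψ : FreeAlgebra F (Fin 3) ≃ₐ[F] FreeAlgebra F (Fin 3))
    (hψ : ψ (FreeAlgebra.ι F 2) = FreeAlgebra.ι F 2) (k : Fin 2) :
    abEquiv F ψ hψ (X k) = ab F (ψ (FreeAlgebra.ι F k.castSucc)) :=
  abMap_X k

/-- If every wild `F[z]`-automorphism of `F[z][x,y]` fails to lift to a `z`-fixing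
automorphism of `F⟨x,y,z⟩`, then no component of a wild automorphism can occur as
the abelianization of a component of a `z`-fixing automorphism of `F⟨x,y,z⟩`;
in particular no such component lifts to a `z`-coordinate. -/
theorem wild_components_not_z_coordinates
    (H : ∀ φ : MvPolynomial (Fin 2) (Polynomial F) ≃ₐ[Polynomial F]
        MvPolynomial (Fin 2) (Polynomial F),
      IsWild F φ → ¬ LiftsToZAut F (φ (X 0)) (φ (X 1))) :
    ∀ φ : MvPolynomial (Fin 2) (Polynomial F) ≃ₐ[Polynomial F]
        MvPolynomial (Fin 2) (Polynomial F),
      IsWild F φ →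
      ¬ ∃ (ψ : FreeAlgebra F (Fin 3) ≃ₐ[F] FreeAlgebra F (Fin 3)) (i : Fin 3),
          ψ (FreeAlgebra.ι F 2) = FreeAlgebra.ι F 2 ∧
          (ab F (ψ (FreeAlgebra.ι F i)) = φ (X 0) ∨
           ab F (ψ (FreeAlgebra.ι F i)) = φ (X 1)) := by
  rintro φ hφ ⟨ψ, i, hψ, hi⟩
  refine H (abEquiv F ψ hψ) ?_ ⟨ψ, hψ, (abEquiv_X F ψ hψ 0).symm, (abEquiv_X F ψ hψ 1).symm⟩
  obtain ⟨k, rfl⟩ | rfl := i.eq_castSucc_or_eq_last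
  · rw [← abEquiv_X F ψ hψ] at hi
    exact hi.elim hφ.of_map_X_eq hφ.of_map_X_eq
  · change ab F (ψ (FreeAlgebra.ι F 2)) = _ ∨ ab F (ψ (FreeAlgebra.ι F 2)) = _ at hi
    rw [hψ, ab_ι_two] at hi
    exact hi.elim (fun h => (φ.map_X_ne_C 0 _ h.symm).elim) (fun h => (φ.map_X_ne_C 1 _ h.symm).elim)

end
end

section
/- In the free associative algebra F⟨x,y⟩ over a field F, for any nonzero polynomial H(x₁,...,xₘ) of the multilinear form H = Σᵢ q_{i,1} x₁ q_{i,2} x₂ ⋯ xₘ q_{i,m+1} with coefficients q_{i,j} ∈ F, if H(x,x,...,x) ≠ 0 then for any nonconstant S ∈ F⟨x,y⟩ we have H(S,S,...,S) ≠ 0. -/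
/-!
Scalars are central, so every monomial `q₁ S q₂ S ⋯ S q_{m+1}` collapses to `(q₁ ⋯ q_{m+1}) • S ^ m`
and `H(S, …, S) = c • S ^ m` with `c = Σᵢ ∏ⱼ q i j` independent of `S`. The hypothesis at `S = x`
forces `c ≠ 0`, and `F⟨x,y⟩` has no zero divisors, so `c • S ^ m ≠ 0` as soon as `S ≠ 0`.
-/

noncomputable section

open FreeAlgebra

/-- Evaluation of the multilinear noncommutative polynomial
`H = Σᵢ q_{i,1} x₁ q_{i,2} x₂ ⋯ xₘ q_{i,m+1}` (with scalar coefficients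
`q i j ∈ F`) at a vector `v` of elements of an `F`-algebra `A`. -/
def mlEval {F : Type} [Field F] {A : Type} [Ring A] [Algebra F A]
    {κ : Type} (t : Finset κ) (m : ℕ) (q : κ → Fin (m + 1) → F)
    (v : Fin m → A) : A :=
  ∑ i ∈ t,
    (List.ofFn fun j : Fin m => algebraMap F A (q i j.castSucc) * v j).prod *
      algebraMap F A (q i (Fin.last m))

theorem List.prod_ofFn_smul_const {R A : Type*} [CommSemiring R] [Semiring A] [Algebra R A]
    (m : ℕ) (c : Fin m → R) (S : A) :
    (List.ofFn fun j => c j • S).prod = (∏ j, c j) • S ^ m := by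
  induction m with
  | zero => simp
  | succ n ih =>
    rw [List.ofFn_succ, List.prod_cons, ih, smul_mul_smul_comm, Fin.prod_univ_succ, pow_succ']

theorem mlEval_const {F : Type} [Field F] {A : Type} [Ring A] [Algebra F A]
    {κ : Type} (t : Finset κ) (m : ℕ) (q : κ → Fin (m + 1) → F) (S : A) :
    mlEval t m q (fun _ => S) = (∑ i ∈ t, ∏ j, q i j) • S ^ m := by
  simp only [mlEval, ← Algebra.smul_def, ← Algebra.commutes, Finset.sum_smul]
  refine Finset.sum_congr rfl fun i _ => ?_
  rw [List.prod_ofFn_smul_const, smul_smul, Fin.prod_univ_castSucc, mul_comm]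

/-- In `F⟨x,y⟩`: if a multilinear polynomial `H` with scalar coefficients
satisfies `H(x, x, ..., x) ≠ 0`, then `H(S, S, ..., S) ≠ 0` for every
nonconstant `S ∈ F⟨x,y⟩`. -/
theorem multilinear_subst_ne_zero {F : Type} [Field F]
    {κ : Type} (t : Finset κ) (m : ℕ) (q : κ → Fin (m + 1) → F)
    (hx : mlEval t m q (fun _ => (ι F 0 : FreeAlgebra F (Fin 2))) ≠ 0)
    (S : FreeAlgebra F (Fin 2))
    (hS : S ∉ Set.range (algebraMap F (FreeAlgebra F (Fin 2)))) :
    mlEval t m q (fun _ => S) ≠ 0 := by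
  rw [mlEval_const] at hx ⊢
  have hc : ∑ i ∈ t, ∏ j, q i j ≠ 0 := left_ne_zero_of_smul hx
  have hS0 : S ≠ 0 := fun h => hS ⟨0, by rw [h, map_zero]⟩
  exact smul_ne_zero hc (pow_ne_zero m hS0)

end
end

section
/- The F-subalgebra of F[x,y,z] generated by the Nagata components f = x - 2y(y²+xz) - (y²+xz)²z, g = y + (y²+xz)z, and z equals all of F[x,y,z]. -/
/-! The Nagata map `(x, y, z) ↦ (f, g, z)` preserves `w = y² + xz`: `w = g² + fz`,
so `w` lies in the algebra generated by `f, g, z`; then `y = g - wz` and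
`x = f + 2yw + w²z` do as well. -/

open MvPolynomial

section Nagata

variable {R A : Type*} [CommRing R] [CommRing A] [Algebra R A]

theorem nagata_sq_add_mul_eq (x y z : A) :
    (y + (y ^ 2 + x * z) * z) ^ 2 + (x - 2 * y * (y ^ 2 + x * z) - (y ^ 2 + x * z) ^ 2 * z) * z =
      y ^ 2 + x * z := by
  ring

theorem mem_adjoin_nagata (x y z : A) :
    x ∈ Algebra.adjoin R
        {x - 2 * y * (y ^ 2 + x * z) - (y ^ 2 + x * z) ^ 2 * z, y + (y ^ 2 + x * z) * z, z} ∧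
      y ∈ Algebra.adjoin R
        {x - 2 * y * (y ^ 2 + x * z) - (y ^ 2 + x * z) ^ 2 * z, y + (y ^ 2 + x * z) * z, z} := by
  set w := y ^ 2 + x * z with hw_def
  set S := Algebra.adjoin R {x - 2 * y * w - w ^ 2 * z, y + w * z, z}
  have hf : x - 2 * y * w - w ^ 2 * z ∈ S := Algebra.subset_adjoin (by simp)
  have hg : y + w * z ∈ S := Algebra.subset_adjoin (by simp)
  have hz : z ∈ S := Algebra.subset_adjoin (by simp)
  have hw : w ∈ S := by
    rw [hw_def, ← nagata_sq_add_mul_eq]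
    exact add_mem (pow_mem hg 2) (mul_mem hf hz)
  have hy : y ∈ S := by
    simpa using sub_mem hg (mul_mem hw hz)
  refine ⟨?_, hy⟩
  have hx : x = (x - 2 * y * w - w ^ 2 * z) + 2 * y * w + w ^ 2 * z := by ring
  rw [hx]
  have h2 : (2 : A) ∈ S := by exact_mod_cast S.natCast_mem 2
  exact add_mem (add_mem hf (mul_mem (mul_mem h2 hy) hw)) (mul_mem (pow_mem hw 2) hz)

end Nagata

theorem nagata_components_generate_general (F : Type) [Field F] :
    Algebra.adjoin F
      ({X 0 - 2 * X 1 * (X 1 ^ 2 + X 0 * X 2) - (X 1 ^ 2 + X 0 * X 2) ^ 2 * X 2,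
        X 1 + (X 1 ^ 2 + X 0 * X 2) * X 2,
        X 2} : Set (MvPolynomial (Fin 3) F)) = ⊤ := by
  obtain ⟨hx, hy⟩ := mem_adjoin_nagata (R := F) (X 0 : MvPolynomial (Fin 3) F) (X 1) (X 2)
  rw [eq_top_iff, ← adjoin_range_X]
  refine Algebra.adjoin_le ?_
  rintro _ ⟨i, rfl⟩
  fin_cases i
  exacts [hx, hy, Algebra.subset_adjoin (by simp)]

/-- The `F`-subalgebra of `F[x,y,z]` generated by the Nagata components
`f = x - 2y(y²+xz) - (y²+xz)²z`, `g = y + (y²+xz)z` and `z` is all of `F[x,y,z]`. -/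
theorem nagata_components_generate (F : Type) [Field F] [CharZero F] :
    Algebra.adjoin F
      ({X 0 - 2 * X 1 * (X 1 ^ 2 + X 0 * X 2) - (X 1 ^ 2 + X 0 * X 2) ^ 2 * X 2,
        X 1 + (X 1 ^ 2 + X 0 * X 2) * X 2,
        X 2} : Set (MvPolynomial (Fin 3) F)) = ⊤ :=
  nagata_components_generate_general F
end
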